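/- arXiv:cond-mat/0604291 — 4 statements merged into one kernel-verified Lean document; each statement's English description precedes it below -/
import Mathlib

section
/- Let φ : ℝⁿ → ℝⁿ be a bijection, differentiable with differentiable inverse ψ, that is positively homogeneous of degree 1, i.e. φ(αI) = αφ(I) for all α > 0 and all I ∈ ℝⁿ. Let S : ℝⁿ → ℝ be differentiable and set S̃ = S ∘ ψ. Then the Planck thermodynamic potential obtained from the Legendre transformation is invariant under this reparametrization change: for every I ∈ ℝⁿ, ⟨I, ∇S(I)⟩ − S(I) = ⟨φ(I), ∇S̃(φ(I))⟩ − S̃(φ(I)). (Theorem 2: the microcanonical Planck potential P_m = Iᵏ ∂S_B/∂Iᵏ − S_B is invariant under the group of homogeneous transformations.) -/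
/-!
Both sides are `⟨I, ∇S(I)⟩ - S(I)` in disguise. The inverse `ψ` of a positively homogeneous
bijection is again positively homogeneous, so by Euler's relation `Dψ(φ I)(φ I) = ψ(φ I) = I`.
The chain rule then turns `⟨φ I, ∇(S ∘ ψ)(φ I)⟩ = DS(I)(Dψ(φ I)(φ I))` into `DS(I)(I) = ⟨I, ∇S(I)⟩`.
-/

open scoped RealInnerProductSpace

section PositivelyHomogeneous

variable {E F : Type*}

theorem Function.RightInverse.map_smul_of_pos [SMul ℝ E] [SMul ℝ F] {φ : E → F} {ψ : F → E}
    (hleft : Function.LeftInverse ψ φ) (hright : Function.RightInverse ψ φ)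
    (hhom : ∀ α : ℝ, 0 < α → ∀ x, φ (α • x) = α • φ x) (α : ℝ) (hα : 0 < α) (y : F) :
    ψ (α • y) = α • ψ y := by
  rw [← hright y, ← hhom α hα, hleft, hleft]

variable [NormedAddCommGroup E] [NormedSpace ℝ E] [NormedAddCommGroup F] [NormedSpace ℝ F]

theorem fderiv_apply_self_of_map_smul_of_pos {f : E → F} {x : E} (hf : DifferentiableAt ℝ f x)
    (hhom : ∀ t : ℝ, 0 < t → f (t • x) = t • f x) :
    fderiv ℝ f x x = f x := by
  have hray : HasDerivAt (fun t : ℝ => t • x) x 1 := by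
    simpa using (hasDerivAt_id (1 : ℝ)).smul_const x
  have hchain : HasDerivAt (fun t : ℝ => f (t • x)) (fderiv ℝ f x x) 1 :=
    hf.hasFDerivAt.comp_hasDerivAt_of_eq 1 hray (one_smul ℝ x).symm
  have hlinear : HasDerivAt (fun t : ℝ => f (t • x)) (f x) 1 := by
    have hscale : HasDerivAt (fun t : ℝ => t • f x) (f x) 1 := by
      simpa using (hasDerivAt_id (1 : ℝ)).smul_const (f x)
    refine hscale.congr_of_eventuallyEq ?_
    filter_upwards [eventually_gt_nhds one_pos] with t ht
    exact hhom t ht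
  exact hchain.unique hlinear

theorem fderiv_comp_apply_self_of_map_smul_of_pos {g : F → ℝ} {ψ : E → F} {x : E}
    (hg : DifferentiableAt ℝ g (ψ x)) (hψ : DifferentiableAt ℝ ψ x)
    (hhom : ∀ t : ℝ, 0 < t → ψ (t • x) = t • ψ x) :
    fderiv ℝ (g ∘ ψ) x x = fderiv ℝ g (ψ x) (ψ x) := by
  rw [fderiv_comp x hg hψ, ContinuousLinearMap.comp_apply,
    fderiv_apply_self_of_map_smul_of_pos hψ hhom]

end PositivelyHomogeneous

theorem planck_potential_homogeneous_invariant_general {n : ℕ}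
    (φ ψ : EuclideanSpace ℝ (Fin n) → EuclideanSpace ℝ (Fin n))
    (hψ : Differentiable ℝ ψ)
    (hleft : Function.LeftInverse ψ φ) (hright : Function.RightInverse ψ φ)
    (hhom : ∀ α : ℝ, 0 < α → ∀ I, φ (α • I) = α • φ I)
    (S : EuclideanSpace ℝ (Fin n) → ℝ) (hS : Differentiable ℝ S) :
    ∀ I : EuclideanSpace ℝ (Fin n),
      ⟪I, gradient S I⟫ - S I
        = ⟪φ I, gradient (S ∘ ψ) (φ I)⟫ - (S ∘ ψ) (φ I) := by
  intro I
  have hψhom : ∀ t : ℝ, 0 < t → ψ (t • φ I) = t • ψ (φ I) := fun t ht =>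
    hright.map_smul_of_pos hleft hhom t ht (φ I)
  have hEuler := fderiv_comp_apply_self_of_map_smul_of_pos (hS _) (hψ (φ I)) hψhom
  simp only [inner_gradient_right, conj_trivial, Function.comp_apply, hEuler, hleft I]

/-- Theorem 2: the microcanonical Planck thermodynamic potential
`P_m = ⟨I, ∇S(I)⟩ − S(I)` obtained from the Legendre transformation is invariant
under a homogeneous reparametrization change φ (with differentiable inverse ψ),
where the entropy in the new representation is `S̃ = S ∘ ψ`. -/
theorem planck_potential_homogeneous_invariant {n : ℕ}
    (φ ψ : EuclideanSpace ℝ (Fin n) → EuclideanSpace ℝ (Fin n))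
    (hbij : Function.Bijective φ)
    (hφ : Differentiable ℝ φ) (hψ : Differentiable ℝ ψ)
    (hleft : Function.LeftInverse ψ φ) (hright : Function.RightInverse ψ φ)
    (hhom : ∀ α : ℝ, 0 < α → ∀ I, φ (α • I) = α • φ I)
    (S : EuclideanSpace ℝ (Fin n) → ℝ) (hS : Differentiable ℝ S) :
    ∀ I : EuclideanSpace ℝ (Fin n),
      ⟪I, gradient S I⟫ - S I
        = ⟪φ I, gradient (S ∘ ψ) (φ I)⟫ - (S ∘ ψ) (φ I) :=
  planck_potential_homogeneous_invariant_general φ ψ hψ hleft hright hhom S hS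
end

section
/- Let s : ℝ → ℝ be twice continuously differentiable with s'(ε) > 0 for all ε ∈ ℝ, and suppose there exist ε₁ < ε₂ such that s''(ε) ≥ 0 for all ε ∈ [ε₁, ε₂] and s''(ε) ≤ 0 for all ε ∉ (ε₁, ε₂) (so s is convex in the interval (ε₁, ε₂) and concave elsewhere). Then there exists a strictly increasing, twice continuously differentiable bijection φ : ℝ → ℝ with φ'(ε) > 0 for all ε, such that s ∘ φ⁻¹ : ℝ → ℝ is concave. (Theorem 3: for a system controlled by only one scaling invariant variable, there is a reparametrization change in which the entropy becomes a concave function.) -/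
/-!
Choose `M > 0` with `s'' ≤ M s'` everywhere: on the compact interval `[ε₁, ε₂]` this holds
by compactness, as `s' > 0` there, and outside it because `s'' ≤ 0`. The new variable is
`φ(ε) = s(ε) + exp(M ε)`. Along it the entropy has slope `s'/φ'`, whose derivative has the sign of
`s'' φ' - s' φ'' = M exp(M ε) (s'' - M s') ≤ 0`, so `s ∘ φ⁻¹` is concave. `φ` is onto because
`exp(M ε) → ∞` at `+∞`, while at `-∞` the function `s`, concave there with positive slope,
tends to `-∞`.
-/

open Set Filter Function Real

theorem IsCompact.exists_pos_forall_le_mul {X : Type*} [TopologicalSpace X] {K : Set X}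
    {f g : X → ℝ} (hK : IsCompact K) (hf : ContinuousOn f K) (hg : ContinuousOn g K)
    (hg_pos : ∀ x ∈ K, 0 < g x) : ∃ M > 0, ∀ x ∈ K, f x ≤ M * g x := by
  obtain ⟨c, hc⟩ := hK.bddAbove_image (hf.div hg fun x hx => (hg_pos x hx).ne')
  refine ⟨max c 1, by positivity, fun x hx => ?_⟩
  have hratio : f x / g x ≤ max c 1 := (hc ⟨x, hx, rfl⟩).trans (le_max_left c 1)
  exact (div_le_iff₀ (hg_pos x hx)).1 hratio

theorem ConcaveOn.tendsto_atBot_of_deriv_pos {f : ℝ → ℝ} {a : ℝ} (hf : ConcaveOn ℝ (Iic a) f)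
    (hfa : DifferentiableAt ℝ f a) (ha : 0 < deriv f a) : Tendsto f atBot atBot := by
  have htangent : ∀ x < a, f x ≤ f a + deriv f a * (x - a) := by
    intro x hx
    have hslope := hf.deriv_le_slope (mem_Iic.2 hx.le) self_mem_Iic hx hfa
    rw [slope_def_field, le_div_iff₀ (sub_pos.2 hx)] at hslope
    linarith
  have hline : Tendsto (fun x => f a + deriv f a * (x - a)) atBot atBot :=
    tendsto_atBot_add_const_left _ _ <|
      (tendsto_atBot_add_const_right _ _ tendsto_id).const_mul_atBot ha
  exact tendsto_atBot_mono' _ ((eventually_lt_atBot a).mono htangent) hline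

theorem exists_deriv2_le_mul_deriv {s : ℝ → ℝ} (hs : ContDiff ℝ 2 s) (hs' : ∀ ε, 0 < deriv s ε)
    {ε₁ ε₂ : ℝ} (hconcave : ∀ ε ∉ Ioo ε₁ ε₂, deriv (deriv s) ε ≤ 0) :
    ∃ M > 0, ∀ ε, deriv (deriv s) ε ≤ M * deriv s ε := by
  have hs1 : ContDiff ℝ 1 (deriv s) := hs.deriv'
  obtain ⟨M, hM, hbound⟩ := (isCompact_Icc (a := ε₁) (b := ε₂)).exists_pos_forall_le_mul
    hs1.continuous_deriv_one.continuousOn hs1.continuous.continuousOn fun ε _ => hs' ε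
  refine ⟨M, hM, fun ε => ?_⟩
  by_cases hε : ε ∈ Icc ε₁ ε₂
  · exact hbound ε hε
  · exact (hconcave ε fun h => hε (Ioo_subset_Icc_self h)).trans (mul_pos hM (hs' ε)).le

theorem concaveOn_comp_invFun_of_antitone_deriv_div {φ g : ℝ → ℝ} (hφ : StrictMono φ)
    (hφ_surj : Surjective φ) (hφ' : ∀ x, deriv φ x ≠ 0)
    (hg : Differentiable ℝ g) (hanti : Antitone fun x => deriv g x / deriv φ x) :
    ConcaveOn ℝ univ (g ∘ invFun φ) := by
  set ψ := invFun φ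
  have hright : RightInverse ψ φ := rightInverse_invFun hφ_surj
  have hleft : LeftInverse ψ φ := leftInverse_invFun hφ.injective
  have hψ_mono : Monotone ψ := fun a b hab => hφ.le_iff_le.1 (by rwa [hright a, hright b])
  have hψ_cont : Continuous ψ := hψ_mono.continuous_of_surjective hleft.surjective
  have hderiv : ∀ y, HasDerivAt (g ∘ ψ) (deriv g (ψ y) / deriv φ (ψ y)) y := fun y =>
    (hg (ψ y)).hasDerivAt.comp y
      (HasDerivAt.of_local_left_inverse hψ_cont.continuousAt
        (differentiableAt_of_deriv_ne_zero (hφ' (ψ y))).hasDerivAt (hφ' (ψ y))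
        (Eventually.of_forall hright))
  refine Antitone.concaveOn_univ_of_deriv (fun y => (hderiv y).differentiableAt) ?_
  rw [funext fun y => (hderiv y).deriv]
  exact hanti.comp_monotone hψ_mono

noncomputable def expReparam (s : ℝ → ℝ) (M ε : ℝ) : ℝ := s ε + exp (M * ε)

section expReparam

variable {s : ℝ → ℝ} {M : ℝ}

theorem hasDerivAt_exp_const_mul (ε : ℝ) :
    HasDerivAt (fun ε => exp (M * ε)) (M * exp (M * ε)) ε := by
  simpa [mul_comm] using ((hasDerivAt_id ε).const_mul M).exp

theorem hasDerivAt_expReparam {ε : ℝ} (hs : DifferentiableAt ℝ s ε) :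
    HasDerivAt (expReparam s M) (deriv s ε + M * exp (M * ε)) ε :=
  hs.hasDerivAt.add (hasDerivAt_exp_const_mul ε)

theorem contDiff_expReparam {n : WithTop ℕ∞} (hs : ContDiff ℝ n s) :
    ContDiff ℝ n (expReparam s M) :=
  hs.add (contDiff_exp.comp (contDiff_const.mul contDiff_id))

theorem deriv_expReparam_pos (hs : Differentiable ℝ s) (hs' : ∀ ε, 0 < deriv s ε) (hM : 0 ≤ M)
    (ε : ℝ) : 0 < deriv (expReparam s M) ε := by
  rw [(hasDerivAt_expReparam (hs ε)).deriv]
  have := hs' ε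
  positivity

theorem surjective_expReparam (hs : Continuous s) (hs_mono : Monotone s)
    (hs_bot : Tendsto s atBot atBot) (hM : 0 < M) : Surjective (expReparam s M) := by
  refine Continuous.surjective (hs.add (continuous_exp.comp (continuous_const_mul M))) ?_ ?_
  · exact tendsto_atTop_add_left_of_le' _ (s 0)
      ((eventually_ge_atTop 0).mono fun _ hε => hs_mono hε)
      (tendsto_exp_atTop.comp (tendsto_id.const_mul_atTop hM))
  · exact hs_bot.atBot_add (tendsto_exp_atBot.comp (tendsto_id.const_mul_atBot hM))

theorem antitone_deriv_div_deriv_expReparam (hs : Differentiable ℝ s)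
    (hs_diff' : Differentiable ℝ (deriv s)) (hs' : ∀ ε, 0 < deriv s ε) (hM : 0 ≤ M)
    (hbound : ∀ ε, deriv (deriv s) ε ≤ M * deriv s ε) :
    Antitone fun ε => deriv s ε / deriv (expReparam s M) ε := by
  simp only [fun ε => (hasDerivAt_expReparam (M := M) (hs ε)).deriv]
  have hφ'' : ∀ ε, HasDerivAt (fun ε => deriv s ε + M * exp (M * ε))
      (deriv (deriv s) ε + M * (M * exp (M * ε))) ε := fun ε =>
    (hs_diff' ε).hasDerivAt.add ((hasDerivAt_exp_const_mul ε).const_mul M)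
  refine antitone_of_hasDerivAt_nonpos (fun ε => (hs_diff' ε).hasDerivAt.div (hφ'' ε)
    (by have := hs' ε; positivity)) fun ε => ?_
  refine div_nonpos_of_nonpos_of_nonneg ?_ (sq_nonneg _)
  calc _ = M * exp (M * ε) * (deriv (deriv s) ε - M * deriv s ε) := by ring
    _ ≤ 0 := mul_nonpos_of_nonneg_of_nonpos (by positivity) (sub_nonpos.2 (hbound ε))

end expReparam

theorem exists_reparametrization_concave_entropy_general
    (s : ℝ → ℝ) (hs : ContDiff ℝ 2 s) (hs' : ∀ ε, 0 < deriv s ε)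
    (ε₁ ε₂ : ℝ)
    (hconcave : ∀ ε ∉ Set.Ioo ε₁ ε₂, deriv (deriv s) ε ≤ 0) :
    ∃ φ : ℝ → ℝ, StrictMono φ ∧ Function.Bijective φ ∧ ContDiff ℝ 2 φ ∧
      (∀ ε, 0 < deriv φ ε) ∧
      ConcaveOn ℝ Set.univ (s ∘ Function.invFun φ) := by
  obtain ⟨M, hM, hbound⟩ := exists_deriv2_le_mul_deriv hs hs' hconcave
  have hs_diff : Differentiable ℝ s := hs.differentiable (by norm_num)
  have hs_diff' : Differentiable ℝ (deriv s) := (hs.deriv' (n := 1)).differentiable (by norm_num)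
  have hs_concave : ConcaveOn ℝ (Iic ε₁) s := by
    refine concaveOn_of_deriv2_nonpos (convex_Iic ε₁) hs.continuous.continuousOn
      hs_diff.differentiableOn hs_diff'.differentiableOn fun ε hε => hconcave ε ?_
    rw [interior_Iic] at hε
    exact fun h => h.1.not_gt hε
  have hφ' := deriv_expReparam_pos hs_diff hs' hM.le
  have hφ_mono := strictMono_of_deriv_pos hφ'
  have hφ_surj := surjective_expReparam hs.continuous (strictMono_of_deriv_pos hs').monotone
    (hs_concave.tendsto_atBot_of_deriv_pos (hs_diff ε₁) (hs' ε₁)) hM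
  refine ⟨_, hφ_mono, ⟨hφ_mono.injective, hφ_surj⟩, contDiff_expReparam hs, hφ', ?_⟩
  exact concaveOn_comp_invFun_of_antitone_deriv_div hφ_mono hφ_surj
    (fun ε => (hφ' ε).ne') hs_diff
    (antitone_deriv_div_deriv_expReparam hs_diff hs_diff' hs' hM.le hbound)

/-- Theorem 3: let the entropy per particle `s` be C² with `s' > 0`, convex on
an interval `[ε₁, ε₂]` and concave elsewhere. Then there is a reparametrization
change, i.e. a strictly increasing C² bijection `φ : ℝ → ℝ` with `φ' > 0`, such
that the entropy in the new representation `s ∘ φ⁻¹` is a concave function. -/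
theorem exists_reparametrization_concave_entropy
    (s : ℝ → ℝ) (hs : ContDiff ℝ 2 s) (hs' : ∀ ε, 0 < deriv s ε)
    (ε₁ ε₂ : ℝ) (h12 : ε₁ < ε₂)
    (hconvex : ∀ ε ∈ Set.Icc ε₁ ε₂, 0 ≤ deriv (deriv s) ε)
    (hconcave : ∀ ε ∉ Set.Ioo ε₁ ε₂, deriv (deriv s) ε ≤ 0) :
    ∃ φ : ℝ → ℝ, StrictMono φ ∧ Function.Bijective φ ∧ ContDiff ℝ 2 φ ∧
      (∀ ε, 0 < deriv φ ε) ∧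
      ConcaveOn ℝ Set.univ (s ∘ Function.invFun φ) :=
  exists_reparametrization_concave_entropy_general s hs hs' ε₁ ε₂ hconcave
end

section
/- Let s : ℝ → ℝ be twice continuously differentiable with s'(ε) > 0 for all ε, and let a : ℝ → ℝ be continuous. Define G(ε) = ∫₀^ε a(u)/s'(u) du and φ(ε) = ∫₀^ε s'(t) exp(G(t)) dt. Then φ is strictly increasing and twice continuously differentiable with φ'(ε) = s'(ε) exp(G(ε)) > 0, and for every ε ∈ ℝ the second derivative of s ∘ φ⁻¹ at φ(ε) equals −a(ε)/φ'(ε)². In particular, if a(ε) ≥ 0 for all ε, then s ∘ φ⁻¹ is concave on the interval φ(ℝ). (This is the key construction ∂φ/∂ε = C β(ε) exp(∫ a/β dε), with ∂²s/∂φ² = −(∂ε/∂φ)² a, in the proof of Theorem 3.) -/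
/-!
A reparametrization `φ` with positive derivative rescales derivatives of `s` by `1/φ'`:
`(s ∘ φ⁻¹)' = (s' / φ') ∘ φ⁻¹` and `(s ∘ φ⁻¹)'' ∘ φ = (s' / φ')' / φ'`. The choice
`φ' = s' exp G` makes `s' / φ' = exp (-G)`, whose derivative is `-exp (-G) a / s'`, so the second
derivative is `-a / φ'²`. When `a ≥ 0`, `G` is monotone, so `(s ∘ φ⁻¹)' = exp (-G ∘ φ⁻¹)` is
antitone on the interval `range φ`, which gives concavity.
-/

open Set Filter Topology Function

theorem contDiff_succ_of_hasDerivAt {n : ℕ} {F f : ℝ → ℝ} (hF : ∀ x, HasDerivAt F (f x) x)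
    (hf : ContDiff ℝ n f) : ContDiff ℝ (n + 1) F := by
  have hderiv : deriv F = f := funext fun x => (hF x).deriv
  exact contDiff_succ_iff_deriv.mpr
    ⟨fun x => (hF x).differentiableAt, by simp, hderiv ▸ hf⟩

section InvFun

variable {φ : ℝ → ℝ}

theorem StrictMono.continuousAt_invFun (hφ : StrictMono φ) {x : ℝ}
    (hx : range φ ∈ 𝓝 (φ x)) : ContinuousAt (invFun φ) (φ x) := by
  have hinv := leftInverse_invFun hφ.injective
  refine StrictMonoOn.continuousAt_of_image_mem_nhds (s := range φ) ?_ hx ?_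
  · rintro _ ⟨y, rfl⟩ _ ⟨z, rfl⟩ h
    rw [hinv, hinv]
    exact hφ.lt_iff_lt.mp h
  · rw [← range_comp, hinv.comp_eq_id, range_id]
    exact univ_mem

theorem StrictMono.hasDerivAt_comp_invFun (hφ : StrictMono φ) {g : ℝ → ℝ} {φ' g' x : ℝ}
    (hx : range φ ∈ 𝓝 (φ x)) (hφx : HasDerivAt φ φ' x) (hφ' : φ' ≠ 0) (hg : HasDerivAt g g' x) :
    HasDerivAt (g ∘ invFun φ) (g' / φ') (φ x) := by
  have hinv : invFun φ (φ x) = x := leftInverse_invFun hφ.injective x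
  have hψ : HasDerivAt (invFun φ) φ'⁻¹ (φ x) :=
    .of_local_left_inverse (hφ.continuousAt_invFun hx) (by rwa [hinv]) hφ'
      (eventually_of_mem hx fun _ hy => invFun_eq hy)
  exact (hinv ▸ hg).comp (φ x) hψ

variable {φ' g g' : ℝ → ℝ}

theorem isOpen_range_of_hasStrictDerivAt_pos (hφ : ∀ x, HasStrictDerivAt φ (φ' x) x)
    (hφ' : ∀ x, 0 < φ' x) : IsOpen (range φ) :=
  (isOpenMap_of_hasStrictDerivAt hφ fun x => (hφ' x).ne').isOpen_range

theorem eqOn_deriv_comp_invFun (hφ : ∀ x, HasStrictDerivAt φ (φ' x) x) (hφ' : ∀ x, 0 < φ' x)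
    (hg : ∀ x, HasDerivAt g (g' x) x) :
    EqOn (deriv (g ∘ invFun φ)) ((g' / φ') ∘ invFun φ) (range φ) := by
  rintro _ ⟨x, rfl⟩
  have hmono := strictMono_of_hasDerivAt_pos (fun x => (hφ x).hasDerivAt) hφ'
  rw [comp_apply, leftInverse_invFun hmono.injective x]
  exact (hmono.hasDerivAt_comp_invFun
    ((isOpen_range_of_hasStrictDerivAt_pos hφ hφ').mem_nhds (mem_range_self x))
    (hφ x).hasDerivAt (hφ' x).ne' (hg x)).deriv

theorem deriv_deriv_comp_invFun (hφ : ∀ x, HasStrictDerivAt φ (φ' x) x) (hφ' : ∀ x, 0 < φ' x)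
    (hg : ∀ x, HasDerivAt g (g' x) x) {q x : ℝ} (hq : HasDerivAt (g' / φ') q x) :
    deriv (deriv (g ∘ invFun φ)) (φ x) = q / φ' x := by
  have hx := (isOpen_range_of_hasStrictDerivAt_pos hφ hφ').mem_nhds (mem_range_self x)
  have hmono := strictMono_of_hasDerivAt_pos (fun x => (hφ x).hasDerivAt) hφ'
  rw [((eqOn_deriv_comp_invFun hφ hφ' hg).eventuallyEq_of_mem hx).deriv_eq]
  exact (hmono.hasDerivAt_comp_invFun hx (hφ x).hasDerivAt (hφ' x).ne' hq).deriv

theorem concaveOn_range_comp_invFun (hφ : ∀ x, HasStrictDerivAt φ (φ' x) x)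
    (hφ' : ∀ x, 0 < φ' x) (hg : ∀ x, HasDerivAt g (g' x) x) (hanti : Antitone (g' / φ')) :
    ConcaveOn ℝ (range φ) (g ∘ invFun φ) := by
  have hopen := isOpen_range_of_hasStrictDerivAt_pos hφ hφ'
  have hmono := strictMono_of_hasDerivAt_pos (fun x => (hφ x).hasDerivAt) hφ'
  have hinv := leftInverse_invFun hmono.injective
  have hdiff : ∀ x, HasDerivAt (g ∘ invFun φ) (g' x / φ' x) (φ x) := fun x =>
    hmono.hasDerivAt_comp_invFun (hopen.mem_nhds (mem_range_self x)) (hφ x).hasDerivAt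
      (hφ' x).ne' (hg x)
  have hconvex : Convex ℝ (range φ) := by
    have hcont : Continuous φ := continuous_iff_continuousAt.mpr fun x => (hφ x).hasDerivAt.continuousAt
    exact convex_iff_ordConnected.mpr (isPreconnected_range hcont).ordConnected
  refine AntitoneOn.concaveOn_of_deriv hconvex ?_ ?_ ?_
  · rintro _ ⟨x, rfl⟩
    exact (hdiff x).continuousAt.continuousWithinAt
  · rw [hopen.interior_eq]
    rintro _ ⟨x, rfl⟩
    exact (hdiff x).differentiableAt.differentiableWithinAt
  · rw [hopen.interior_eq, (eqOn_deriv_comp_invFun hφ hφ' hg).congr_antitoneOn]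
    rintro _ ⟨x, rfl⟩ _ ⟨y, rfl⟩ hxy
    simp only [comp_apply, hinv x, hinv y]
    exact hanti (hmono.le_iff_le.mp hxy)

end InvFun

section MulExp

variable {s φ G β a : ℝ → ℝ}

theorem div_mul_exp_eq_exp_neg (hβ : ∀ x, β x ≠ 0) :
    β / (fun x => β x * Real.exp (G x)) = fun x => Real.exp (-G x) := funext fun x => by
  simp only [Pi.div_apply, Real.exp_neg]
  field_simp [hβ x]

theorem deriv_deriv_comp_invFun_of_deriv_eq_mul_exp
    (hφ : ∀ x, HasStrictDerivAt φ (β x * Real.exp (G x)) x) (hβ : ∀ x, 0 < β x)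
    (hs : ∀ x, HasDerivAt s (β x) x) (hG : ∀ x, HasDerivAt G (a x / β x) x) (x : ℝ) :
    deriv (deriv (s ∘ invFun φ)) (φ x) = -a x / (β x * Real.exp (G x)) ^ 2 := by
  have hratio_deriv : HasDerivAt (β / fun x => β x * Real.exp (G x))
      (Real.exp (-G x) * -(a x / β x)) x :=
    div_mul_exp_eq_exp_neg (fun x => (hβ x).ne') ▸ (hG x).neg.exp
  rw [deriv_deriv_comp_invFun hφ (fun x => mul_pos (hβ x) (Real.exp_pos _)) hs hratio_deriv,
    Real.exp_neg]
  field_simp [(hβ x).ne']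

theorem concaveOn_range_comp_invFun_of_deriv_eq_mul_exp
    (hφ : ∀ x, HasStrictDerivAt φ (β x * Real.exp (G x)) x) (hβ : ∀ x, 0 < β x)
    (hs : ∀ x, HasDerivAt s (β x) x) (hG : ∀ x, HasDerivAt G (a x / β x) x) (ha : 0 ≤ a) :
    ConcaveOn ℝ (range φ) (s ∘ invFun φ) := by
  have hGmono : Monotone G :=
    monotone_of_hasDerivAt_nonneg hG fun x => div_nonneg (ha x) (hβ x).le
  refine concaveOn_range_comp_invFun hφ (fun x => mul_pos (hβ x) (Real.exp_pos _)) hs ?_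
  rw [div_mul_exp_eq_exp_neg fun x => (hβ x).ne']
  exact fun x y hxy => Real.exp_le_exp.mpr (neg_le_neg (hGmono hxy))

end MulExp

/-- The key construction in the proof of Theorem 3: with `β = s' > 0` and a
continuous `a`, setting `G(ε) = ∫₀^ε a/s'` and `φ(ε) = ∫₀^ε s'(t) exp(G(t)) dt`,
the map `φ` is a strictly increasing C² reparametrization with
`φ' = s' exp(G) > 0`, the second derivative of the entropy in the new
representation satisfies `(s ∘ φ⁻¹)''(φ(ε)) = −a(ε)/φ'(ε)²`, and if `a ≥ 0`
then `s ∘ φ⁻¹` is concave on `φ(ℝ)`. -/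
theorem reparametrization_construction
    (s a : ℝ → ℝ) (hs : ContDiff ℝ 2 s) (hs' : ∀ ε, 0 < deriv s ε)
    (ha : Continuous a)
    (G : ℝ → ℝ) (hG : G = fun ε => ∫ u in (0:ℝ)..ε, a u / deriv s u)
    (φ : ℝ → ℝ) (hφ : φ = fun ε => ∫ t in (0:ℝ)..ε, deriv s t * Real.exp (G t)) :
    StrictMono φ ∧ ContDiff ℝ 2 φ ∧
    (∀ ε, deriv φ ε = deriv s ε * Real.exp (G ε) ∧ 0 < deriv φ ε) ∧
    (∀ ε, deriv (deriv (s ∘ Function.invFun φ)) (φ ε) = -(a ε) / (deriv φ ε) ^ 2) ∧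
    ((∀ ε, 0 ≤ a ε) → ConcaveOn ℝ (Set.range φ) (s ∘ Function.invFun φ)) := by
  have hs'C1 : ContDiff ℝ 1 (deriv s) := hs.deriv'
  have hsd : ∀ ε, HasDerivAt s (deriv s ε) ε :=
    fun ε => (hs.differentiable two_ne_zero ε).hasDerivAt
  have hG' : Continuous fun u => a u / deriv s u := ha.div hs'C1.continuous fun u => (hs' u).ne'
  have hGd : ∀ ε, HasDerivAt G (a ε / deriv s ε) ε := fun ε =>
    hG ▸ (hG'.integral_hasStrictDerivAt 0 ε).hasDerivAt
  have hGC1 : ContDiff ℝ 1 G := contDiff_succ_of_hasDerivAt (n := 0) hGd (contDiff_zero.mpr hG')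
  have hφ'C1 : ContDiff ℝ 1 fun ε => deriv s ε * Real.exp (G ε) :=
    hs'C1.mul (Real.contDiff_exp.comp hGC1)
  have hφd : ∀ ε, HasStrictDerivAt φ (deriv s ε * Real.exp (G ε)) ε := fun ε =>
    hφ ▸ hφ'C1.continuous.integral_hasStrictDerivAt 0 ε
  have hφ'pos : ∀ ε, 0 < deriv s ε * Real.exp (G ε) := fun ε => mul_pos (hs' ε) (Real.exp_pos _)
  have hderiv : ∀ ε, deriv φ ε = deriv s ε * Real.exp (G ε) := fun ε => (hφd ε).hasDerivAt.deriv
  refine ⟨strictMono_of_hasDerivAt_pos (fun ε => (hφd ε).hasDerivAt) hφ'pos,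
    contDiff_succ_of_hasDerivAt (n := 1) (fun ε => (hφd ε).hasDerivAt) hφ'C1,
    fun ε => ⟨hderiv ε, hderiv ε ▸ hφ'pos ε⟩, fun ε => ?_,
    concaveOn_range_comp_invFun_of_deriv_eq_mul_exp hφd hs' hsd hGd⟩
  rw [hderiv]
  exact deriv_deriv_comp_invFun_of_deriv_eq_mul_exp hφd hs' hsd hGd ε
end

section
/- Let a < b be real numbers, s : ℝ → ℝ be continuous on [a, b], and β ∈ ℝ. Then the limit as N → ∞ (N ranging over the natural numbers) of −(1/N) · ln( ∫_a^b exp(−N (β x − s(x))) dx ) equals the minimum over x ∈ [a, b] of β x − s(x). (Equivalence in the thermodynamic limit between the canonical Planck thermodynamic potential per particle, P(β, N) = −ln Z(β, N), and the microcanonical Legendre transform P_m(β) = min_i (β i − s(i)) of the entropy per particle s.) -/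
/-!
Laplace's principle. If `m` is the essential infimum of `f` under a finite measure `μ`, then
`∫ exp (-t f) dμ ≤ μ(X) e^{-t m}`, while for every `M > m` Markov's inequality gives
`∫ exp (-t f) dμ ≥ μ{f ≤ M} e^{-t M}` with `μ{f ≤ M} > 0`. Taking `-(1/t) log` squeezes the limit
between `m` and every `M > m`, the prefactors contributing only `O(1/t)`. For `f = βx - s(x)`
continuous on `[a, b]`, each sublevel set `{f ≤ M}` with `M > min f` contains a nonempty open
subset of `(a, b)`, so it has positive Lebesgue measure.
-/

open MeasureTheory Filter Set Real Topology

theorem le_neg_inv_mul_log_of_le_mul_exp {I C t m : ℝ} (hI : 0 < I) (hC : 0 < C) (ht : 0 < t)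
    (h : I ≤ C * exp (-(t * m))) : m - log C / t ≤ -(1 / t * log I) := by
  have hlog : log I ≤ log C - t * m := by
    simpa [log_mul hC.ne' (exp_ne_zero _), log_exp, sub_eq_add_neg] using log_le_log hI h
  have : log I / t ≤ log C / t - m := by
    rw [div_le_iff₀ ht, sub_mul, div_mul_cancel₀ _ ht.ne']; linarith
  rw [one_div_mul_eq_div]; linarith

theorem neg_inv_mul_log_le_of_mul_exp_le {I c t M : ℝ} (hc : 0 < c) (ht : 0 < t)
    (h : c * exp (-(t * M)) ≤ I) : -(1 / t * log I) ≤ M - log c / t := by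
  have hlog : log c - t * M ≤ log I := by
    simpa [log_mul hc.ne' (exp_ne_zero _), log_exp, sub_eq_add_neg] using
      log_le_log (by positivity) h
  have : log c / t - M ≤ log I / t := by
    rw [le_div_iff₀ ht, sub_mul, div_mul_cancel₀ _ ht.ne']; linarith
  rw [one_div_mul_eq_div]; linarith

theorem tendsto_neg_inv_mul_log_of_exp_bounds {I : ℝ → ℝ} {m C : ℝ} (hC : 0 < C)
    (hupper : ∀ᶠ t in atTop, I t ≤ C * exp (-(t * m)))
    (hlower : ∀ M > m, ∃ c > 0, ∀ᶠ t in atTop, c * exp (-(t * M)) ≤ I t) :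
    Tendsto (fun t => -(1 / t * log (I t))) atTop (𝓝 m) := by
  have hcorr (M c : ℝ) : Tendsto (fun t : ℝ => M - c / t) atTop (𝓝 M) := by
    simpa using tendsto_const_nhds.sub ((tendsto_const_nhds (x := c)).div_atTop tendsto_id)
  rw [tendsto_order]
  refine ⟨fun m' hm' => ?_, fun m' hm' => ?_⟩
  · obtain ⟨c, hc, hlow⟩ := hlower (m + 1) (by linarith)
    filter_upwards [(hcorr m (log C)).eventually (lt_mem_nhds hm'), hupper, hlow,
      eventually_gt_atTop 0] with t hm't hup hlo ht
    exact hm't.trans_le <|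
      le_neg_inv_mul_log_of_le_mul_exp ((mul_pos hc (exp_pos _)).trans_le hlo) hC ht hup
  · obtain ⟨c, hc, hlow⟩ := hlower ((m + m') / 2) (by linarith)
    filter_upwards [(hcorr ((m + m') / 2) (log c)).eventually
      (gt_mem_nhds (show (m + m') / 2 < m' by linarith)), hlow,
      eventually_gt_atTop 0] with t hm't hlo ht
    exact (neg_inv_mul_log_le_of_mul_exp_le hc ht hlo).trans_lt hm't

section Laplace

variable {X : Type*} [MeasurableSpace X] {μ : Measure X} [IsFiniteMeasure μ] {f : X → ℝ}
  {m t : ℝ}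

theorem integrable_exp_neg_mul (hf : AEStronglyMeasurable f μ) (hm : ∀ᵐ x ∂μ, m ≤ f x)
    (ht : 0 ≤ t) : Integrable (fun x => exp (-(t * f x))) μ := by
  refine .of_bound (by fun_prop) (exp (-(t * m))) ?_
  filter_upwards [hm] with x hx
  rw [norm_of_nonneg (exp_pos _).le, exp_le_exp]
  nlinarith

theorem integral_exp_neg_mul_le (hm : ∀ᵐ x ∂μ, m ≤ f x) (ht : 0 ≤ t) :
    ∫ x, exp (-(t * f x)) ∂μ ≤ μ.real univ * exp (-(t * m)) := by
  rw [mul_comm]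
  refine (le_norm_self _).trans (norm_integral_le_of_norm_le_const ?_)
  filter_upwards [hm] with x hx
  rw [norm_of_nonneg (exp_pos _).le, exp_le_exp]
  nlinarith

theorem measureReal_mul_exp_neg_mul_le_integral (hf : AEStronglyMeasurable f μ)
    (hm : ∀ᵐ x ∂μ, m ≤ f x) (ht : 0 ≤ t) (M : ℝ) :
    μ.real {x | f x ≤ M} * exp (-(t * M)) ≤ ∫ x, exp (-(t * f x)) ∂μ := by
  have hmarkov := mul_meas_ge_le_integral_of_nonneg (ae_of_all _ fun x => (exp_pos _).le)
    (integrable_exp_neg_mul hf hm ht) (exp (-(t * M)))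
  refine le_trans (mul_le_mul_of_nonneg_right (measureReal_mono fun x hx => ?_) (exp_pos _).le)
    ((mul_comm _ _).trans_le hmarkov)
  simp only [mem_ofPred_eq, exp_le_exp, neg_le_neg_iff] at hx ⊢
  exact mul_le_mul_of_nonneg_left hx ht

theorem tendsto_neg_inv_mul_log_integral_exp_neg_mul (hf : AEStronglyMeasurable f μ)
    (hm : ∀ᵐ x ∂μ, m ≤ f x) (hM : ∀ M > m, 0 < μ {x | f x ≤ M}) :
    Tendsto (fun t => -(1 / t * log (∫ x, exp (-(t * f x)) ∂μ))) atTop (𝓝 m) := by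
  have hpos : ∀ M > m, 0 < μ.real {x | f x ≤ M} := fun M hM' =>
    ENNReal.toReal_pos (hM M hM').ne' (measure_ne_top _ _)
  refine tendsto_neg_inv_mul_log_of_exp_bounds ((hpos (m + 1) (by linarith)).trans_le
    (measureReal_mono (subset_univ _))) ?_ fun M hM' => ⟨_, hpos M hM', ?_⟩
  · filter_upwards [eventually_ge_atTop 0] with t ht using integral_exp_neg_mul_le hm ht
  · filter_upwards [eventually_ge_atTop 0] with t ht using
      measureReal_mul_exp_neg_mul_le_integral hf hm ht M

end Laplace

theorem volume_restrict_Icc_setOf_le_pos {f : ℝ → ℝ} {a b x₀ M : ℝ} (hab : a < b)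
    (hf : ContinuousOn f (Icc a b)) (hx₀ : x₀ ∈ Icc a b) (hM : f x₀ < M) :
    0 < volume.restrict (Icc a b) {x | f x ≤ M} := by
  have hopen : IsOpen (Ioo a b ∩ f ⁻¹' Iio M) :=
    (hf.mono Ioo_subset_Icc_self).isOpen_inter_preimage isOpen_Ioo isOpen_Iio
  have hne : (Ioo a b ∩ f ⁻¹' Iio M).Nonempty := by
    have : NeBot (𝓝[Ioo a b] x₀) :=
      mem_closure_iff_nhdsWithin_neBot.1 (by rwa [closure_Ioo hab.ne])
    exact (eventually_mem_nhdsWithin.and (((hf x₀ hx₀).mono Ioo_subset_Icc_self).eventually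
      (gt_mem_nhds hM))).exists
  calc 0 < volume (Ioo a b ∩ f ⁻¹' Iio M) := hopen.measure_pos volume hne
    _ ≤ volume.restrict (Icc a b) {x | f x ≤ M} := by
      rw [Measure.restrict_apply' measurableSet_Icc]
      exact measure_mono fun x hx => ⟨le_of_lt (show f x < M from hx.2), Ioo_subset_Icc_self hx.1⟩

/-- Equivalence in the thermodynamic limit between the canonical Planck
potential per particle `−(1/N) ln Z(β,N)`, with
`Z(β,N) = ∫_a^b exp(−N(βx − s(x))) dx`, and the microcanonical Legendre
transform `P_m(β) = min_{x ∈ [a,b]} (βx − s(x))` of the entropy per particle. -/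
theorem planck_potential_thermodynamic_limit
    (a b : ℝ) (hab : a < b) (s : ℝ → ℝ) (hs : ContinuousOn s (Set.Icc a b))
    (β : ℝ) :
    Filter.Tendsto
      (fun N : ℕ =>
        -((1 / (N : ℝ)) *
          Real.log (∫ x in Set.Icc a b, Real.exp (-((N : ℝ) * (β * x - s x))))))
      Filter.atTop
      (nhds (sInf ((fun x => β * x - s x) '' Set.Icc a b))) := by
  set f : ℝ → ℝ := fun x => β * x - s x
  have hf : ContinuousOn f (Icc a b) := (continuousOn_const.mul continuousOn_id).sub hs
  obtain ⟨x₀, hx₀, hinf, hmin⟩ :=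
    isCompact_Icc.exists_sInf_image_eq_and_le (nonempty_Icc.2 hab.le) hf
  rw [hinf]
  exact (tendsto_neg_inv_mul_log_integral_exp_neg_mul (hf.aestronglyMeasurable measurableSet_Icc)
    ((ae_restrict_iff' measurableSet_Icc).2 (ae_of_all _ hmin)) fun M hM =>
      volume_restrict_Icc_setOf_le_pos hab hf hx₀ hM).comp tendsto_natCast_atTop_atTop
end
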